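/- Let p ≥ 1 and let φ₁, …, φ_p > 0. Define cross length-scales φ_{ij} = √((φ_i² + φ_j²)/2) for all i, j (so φ_{ii} = φ_i), let R be the p×p exchangeable correlation matrix with R_{ii} = 1 and R_{ij} = 1/2 for i ≠ j, and set σ_{ij} = R_{ij}·√(φ_i φ_j)/φ_{ij} (so σ_{ii} = 1). Then the matrix-valued kernel C with entries C_{ij}(s,t) = σ_{ij}·exp(−φ_{ij}|s−t|) is a valid (positive semidefinite) multivariate covariance function on ℝ: for every n ≥ 1, every choice of points t₁, …, t_n ∈ ℝ and every choice of vectors a₁, …, a_n ∈ ℝ^p, one has Σ_{u=1}^{n} Σ_{v=1}^{n} Σ_{i=1}^{p} Σ_{j=1}^{p} a_{u,i}·σ_{ij}·exp(−φ_{ij}|t_u − t_v|)·a_{v,j} ≥ 0. (Validity of the multivariate Matérn cross-covariance specification with smoothness ν = 1/2 used in the stationary simulation scenario.) -/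

import Mathlib

open MeasureTheory ProbabilityTheory Real Set
open scoped ENNReal NNReal Classical

noncomputable section

/-- Kendall's tau between two real random variables `X, Y` on `(Ω, P)`:
`τ(X,Y) = P{(X−X′)(Y−Y′) > 0} − P{(X−X′)(Y−Y′) < 0}` where `(X′,Y′)` is an
independent copy of `(X,Y)`, realized on the product space. -/
noncomputable def kendallTau {Ω : Type*} [MeasurableSpace Ω] (P : Measure Ω)
    (X Y : Ω → ℝ) : ℝ :=
  ((P.prod P) {p : Ω × Ω | 0 < (X p.1 - X p.2) * (Y p.1 - Y p.2)}).toReal -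
  ((P.prod P) {p : Ω × Ω | (X p.1 - X p.2) * (Y p.1 - Y p.2) < 0}).toReal

/-- The psd square root of a psd matrix, as `Matrix.PosSemidef.sqrt` was defined in Mathlib
(Dec 2024); restored here since Mathlib removed it. -/
noncomputable def Matrix.PosSemidef.sqrt {n 𝕜 : Type*} [Fintype n] [RCLike 𝕜] [PartialOrder 𝕜] [DecidableEq n]
    {A : Matrix n n 𝕜} (hA : A.PosSemidef) : Matrix n n 𝕜 :=
  hA.1.eigenvectorUnitary.1 * Matrix.diagonal ((↑) ∘ (√·) ∘ hA.1.eigenvalues) *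
    (star hA.1.eigenvectorUnitary : Matrix n n 𝕜)

/-- The law of a mean-zero Gaussian vector with covariance matrix `S`
(realized as the pushforward of i.i.d. standard normals by the psd square root of `S`). -/
noncomputable def mvGaussian {d : ℕ} (S : Matrix (Fin d) (Fin d) ℝ) :
    Measure (Fin d → ℝ) :=
  if h : S.PosSemidef then
    Measure.map (fun z => h.sqrt.mulVec z) (Measure.pi fun _ : Fin d => gaussianReal 0 1)
  else 0

/-- `Φ_d(a₁,…,a_d; S) = P(W₁ ≤ a₁, …, W_d ≤ a_d)` for a mean-zero Gaussian vector `W`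
with covariance `S`; a coordinate `aᵢ = +∞` drops the constraint and `aᵢ = −∞` gives 0. -/
noncomputable def PhiD {d : ℕ} (a : Fin d → EReal) (S : Matrix (Fin d) (Fin d) ℝ) : ℝ :=
  (mvGaussian S {w | ∀ i, (w i : EReal) ≤ a i}).toReal

/-- Standard normal CDF `Φ`. -/
noncomputable def stdPhi (x : ℝ) : ℝ := ((gaussianReal 0 1) (Set.Iic x)).toReal

/-- Standard normal CDF extended to `EReal` arguments (`Φ(+∞)=1`, `Φ(−∞)=0`). -/
noncomputable def stdPhiE (a : EReal) : ℝ :=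
  ((gaussianReal 0 1) {x : ℝ | (x : EReal) ≤ a}).toReal

/-- `Φ₂(a,b;ρ)`: bivariate standard normal CDF with correlation `ρ`. -/
noncomputable def Phi2 (a b : EReal) (ρ : ℝ) : ℝ := PhiD ![a, b] !![1, ρ; ρ, 1]

/-- `(U,V)` is a bivariate standard normal vector with correlation `ρ` on `(Ω,P)`. -/
def IsBivStdNormal {Ω : Type*} [MeasurableSpace Ω] (P : Measure Ω)
    (U V : Ω → ℝ) (ρ : ℝ) : Prop :=
  Measure.map (fun ω => ![U ω, V ω]) P = mvGaussian !![1, ρ; ρ, 1]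

lemma gauss_kernel_psd {n : ℕ} (s : ℝ) (hs : 0 ≤ s) (x b : Fin n → ℝ) :
    0 ≤ ∑ u : Fin n, ∑ v : Fin n, b u * b v * Real.exp (-(x u - x v)^2 * s) := by
  set d : Fin n → ℝ := fun u => b u * Real.exp (-(x u)^2 * s) with hd
  have summ : ∀ u v : Fin n,
      Summable (fun k : ℕ => (2*s)^k / k.factorial * (d u * (x u)^k) * (d v * (x v)^k)) := by
    intro u v
    have h0 := (Real.summable_pow_div_factorial (2*s*(x u * x v))).mul_left (d u * d v)
    refine h0.congr fun k => ?_
    rw [mul_pow, mul_pow]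
    ring
  have key : ∀ u v : Fin n, b u * b v * Real.exp (-(x u - x v)^2 * s)
      = ∑' k : ℕ, (2*s)^k / k.factorial * (d u * (x u)^k) * (d v * (x v)^k) := by
    intro u v
    have h1 : Real.exp (2*s*(x u * x v)) = ∑' k : ℕ, (2*s*(x u * x v))^k / k.factorial := by
      rw [Real.exp_eq_exp_ℝ, NormedSpace.exp_eq_tsum_div]
    have h2 : b u * b v * Real.exp (-(x u - x v)^2 * s)
        = d u * d v * Real.exp (2*s*(x u * x v)) := by
      rw [show -(x u - x v)^2*s = (-(x u)^2*s) + ((-(x v)^2*s) + 2*s*(x u*x v)) by ring,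
        Real.exp_add, Real.exp_add, hd]
      ring
    rw [h2, h1, ← tsum_mul_left]
    congr 1; funext k
    rw [mul_pow, mul_pow]
    ring
  calc (0:ℝ) ≤ ∑' k : ℕ, (2*s)^k / k.factorial * (∑ u : Fin n, d u * (x u)^k)^2 := by
        refine tsum_nonneg fun k => mul_nonneg (div_nonneg (pow_nonneg (by linarith) _)
          (Nat.cast_nonneg _)) (sq_nonneg _)
    _ = ∑ u : Fin n, ∑ v : Fin n, b u * b v * Real.exp (-(x u - x v)^2 * s) := by
        have hswap : ∑' k : ℕ, (2*s)^k / k.factorial * (∑ u : Fin n, d u * (x u)^k)^2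
            = ∑' k : ℕ, ∑ u : Fin n, ∑ v : Fin n,
                (2*s)^k / k.factorial * (d u * (x u)^k) * (d v * (x v)^k) := by
          congr 1; funext k
          rw [sq, Finset.sum_mul_sum]
          rw [Finset.mul_sum]
          congr 1; funext u
          rw [Finset.mul_sum]
          congr 1; funext v
          ring
        rw [hswap, Summable.tsum_finsetSum (fun u _ => summable_sum (fun v _ => summ u v))]
        refine Finset.sum_congr rfl fun u _ => ?_
        rw [Summable.tsum_finsetSum (fun v _ => summ u v)]
        exact Finset.sum_congr rfl fun v _ => (key u v).symm

lemma exp_neg_le_aux {x : ℝ} (hx : 0 < x) : Real.exp (-x) ≤ 4 / x^2 := by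
  rw [Real.exp_neg, inv_eq_one_div, div_le_div_iff₀ (Real.exp_pos x) (by positivity)]
  have h := Real.add_one_le_exp (x/2)
  have h2 : Real.exp x = Real.exp (x/2) * Real.exp (x/2) := by
    rw [← Real.exp_add]; ring_nf
  nlinarith [Real.exp_pos (x/2)]

lemma exp_neg_le_aux' {x : ℝ} (hx : 0 < x) : Real.exp (-x) ≤ 1 / x := by
  rw [Real.exp_neg, inv_eq_one_div, div_le_div_iff₀ (Real.exp_pos x) hx]
  nlinarith [Real.add_one_le_exp x]

lemma contOn_aux (p q r : ℝ) :
    ContinuousOn (fun t : ℝ => t ^ r * Real.exp (-(p/t) - q*t)) (Ioi 0) := by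
  apply ContinuousOn.mul
  · exact fun t ht => (Real.continuousAt_rpow_const t r (Or.inl (ne_of_gt ht))).continuousWithinAt
  · apply ContinuousOn.rexp
    apply ContinuousOn.sub
    · exact (continuousOn_const.div continuousOn_id (fun t ht => ne_of_gt ht)).neg
    · exact (continuous_const.mul continuous_id).continuousOn

lemma integrable_core32 (p q : ℝ) (hp : 0 < p) (hq : 0 ≤ q) :
    IntegrableOn (fun t : ℝ => t ^ (-(3:ℝ)/2) * Real.exp (-(p/t) - q*t)) (Ioi 0) := by
  have hmeas : AEStronglyMeasurable (fun t : ℝ => t ^ (-(3:ℝ)/2) * Real.exp (-(p/t) - q*t))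
      (volume.restrict (Ioi (0:ℝ))) :=
    (contOn_aux p q _).aestronglyMeasurable measurableSet_Ioi
  have hsplit : Ioi (0:ℝ) = Ioc (0:ℝ) 1 ∪ Ioi 1 := by
    rw [Ioc_union_Ioi_eq_Ioi]; norm_num
  rw [hsplit]
  apply IntegrableOn.union
  · -- bounded by 4/p^2
    apply Integrable.mono' (g := fun _ : ℝ => 4/p^2)
    · exact integrableOn_const measure_Ioc_lt_top.ne
    · exact hmeas.mono_set (by rw [hsplit]; exact subset_union_left)
    · filter_upwards [ae_restrict_mem measurableSet_Ioc] with t ht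
      obtain ⟨ht0, ht1⟩ := ht
      have h1 : Real.exp (-(p/t) - q*t) ≤ Real.exp (-(p/t)) := by
        apply Real.exp_le_exp.mpr; nlinarith
      have h2 : Real.exp (-(p/t)) ≤ 4 / (p/t)^2 := exp_neg_le_aux (by positivity)
      have ht2 : t ^ (-(3:ℝ)/2) * t^(2:ℕ) = t ^ ((1:ℝ)/2) := by
        rw [← Real.rpow_natCast t 2, ← Real.rpow_add ht0]; norm_num
      have h3 : t ^ (-(3:ℝ)/2) * (4 / (p/t)^2) = 4/p^2 * t ^ ((1:ℝ)/2) := by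
        rw [div_pow, div_div_eq_mul_div, show (4:ℝ)*t^2/p^2 = (4/p^2)*t^(2:ℕ) by ring,
          ← mul_assoc, mul_comm (t ^ (-(3:ℝ)/2)) (4/p^2), mul_assoc, ht2]
      have h4 : t ^ ((1:ℝ)/2) ≤ 1 := by
        apply Real.rpow_le_one (le_of_lt ht0) ht1 (by norm_num)
      have h5 : (0:ℝ) ≤ t ^ (-(3:ℝ)/2) := Real.rpow_nonneg (le_of_lt ht0) _
      rw [Real.norm_eq_abs, abs_of_nonneg (by positivity)]
      calc t ^ (-(3:ℝ)/2) * Real.exp (-(p/t) - q*t) ≤ t ^ (-(3:ℝ)/2) * (4 / (p/t)^2) := by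
            apply mul_le_mul_of_nonneg_left (le_trans h1 h2) h5
        _ = 4/p^2 * t ^ ((1:ℝ)/2) := h3
        _ ≤ 4/p^2 := mul_le_of_le_one_right (by positivity) h4
  · -- bounded by t^(-3/2)
    apply Integrable.mono' (g := fun t : ℝ => t ^ (-(3:ℝ)/2))
    · exact integrableOn_Ioi_rpow_of_lt (by norm_num) one_pos
    · exact hmeas.mono_set (by rw [hsplit]; exact subset_union_right)
    · filter_upwards [ae_restrict_mem measurableSet_Ioi] with t ht
      have ht0 : (0:ℝ) < t := lt_trans one_pos ht
      rw [Real.norm_eq_abs, abs_of_nonneg (by positivity)]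
      have : Real.exp (-(p/t) - q*t) ≤ 1 := by
        rw [Real.exp_le_one_iff]
        have : 0 < p/t := by positivity
        nlinarith
      nlinarith [Real.rpow_nonneg (le_of_lt ht0) (-(3:ℝ)/2), Real.exp_pos (-(p/t)-q*t)]

lemma integrable_core12 (p q : ℝ) (hp : 0 < p) (hq : 0 < q) :
    IntegrableOn (fun t : ℝ => t ^ (-(1:ℝ)/2) * Real.exp (-(p/t) - q*t)) (Ioi 0) := by
  have hmeas : AEStronglyMeasurable (fun t : ℝ => t ^ (-(1:ℝ)/2) * Real.exp (-(p/t) - q*t))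
      (volume.restrict (Ioi (0:ℝ))) :=
    (contOn_aux p q _).aestronglyMeasurable measurableSet_Ioi
  have hsplit : Ioi (0:ℝ) = Ioc (0:ℝ) 1 ∪ Ioi 1 := by
    rw [Ioc_union_Ioi_eq_Ioi]; norm_num
  rw [hsplit]
  apply IntegrableOn.union
  · apply Integrable.mono' (g := fun _ : ℝ => 1/p)
    · exact integrableOn_const measure_Ioc_lt_top.ne
    · exact hmeas.mono_set (by rw [hsplit]; exact subset_union_left)
    · filter_upwards [ae_restrict_mem measurableSet_Ioc] with t ht
      obtain ⟨ht0, ht1⟩ := ht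
      have h1 : Real.exp (-(p/t) - q*t) ≤ Real.exp (-(p/t)) := by
        apply Real.exp_le_exp.mpr; nlinarith
      have h2 : Real.exp (-(p/t)) ≤ 1 / (p/t) := exp_neg_le_aux' (by positivity)
      have h2' : (1:ℝ) / (p/t) = t/p := one_div_div p t
      have ht2 : t ^ (-(1:ℝ)/2) * t = t ^ ((1:ℝ)/2) := by
        nth_rewrite 2 [← Real.rpow_one t]
        rw [← Real.rpow_add ht0]; norm_num
      have h4 : t ^ ((1:ℝ)/2) ≤ 1 := Real.rpow_le_one (le_of_lt ht0) ht1 (by norm_num)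
      have h5 : (0:ℝ) ≤ t ^ (-(1:ℝ)/2) := Real.rpow_nonneg (le_of_lt ht0) _
      rw [Real.norm_eq_abs, abs_of_nonneg (by positivity)]
      calc t ^ (-(1:ℝ)/2) * Real.exp (-(p/t) - q*t) ≤ t ^ (-(1:ℝ)/2) * (t/p) := by
            apply mul_le_mul_of_nonneg_left (le_trans h1 (h2.trans_eq h2')) h5
        _ = t ^ ((1:ℝ)/2) / p := by rw [← mul_div_assoc, ht2]
        _ ≤ 1/p := by gcongr
  · apply Integrable.mono' (g := fun t : ℝ => Real.exp (-q*t))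
    · exact exp_neg_integrableOn_Ioi 1 hq
    · exact hmeas.mono_set (by rw [hsplit]; exact subset_union_right)
    · filter_upwards [ae_restrict_mem measurableSet_Ioi] with t ht
      have ht0 : (0:ℝ) < t := lt_trans one_pos ht
      rw [Real.norm_eq_abs, abs_of_nonneg (by positivity)]
      have h1 : t ^ (-(1:ℝ)/2) ≤ 1 :=
        Real.rpow_le_one_of_one_le_of_nonpos (le_of_lt ht) (by norm_num)
      have h2 : Real.exp (-(p/t) - q*t) ≤ Real.exp (-q*t) := by
        apply Real.exp_le_exp.mpr
        have : 0 < p/t := by positivity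
        nlinarith
      nlinarith [Real.exp_pos (-(p/t)-q*t), Real.rpow_nonneg (le_of_lt ht0) (-(1:ℝ)/2),
        Real.exp_pos (-q*t)]

lemma reflect_sub (p q : ℝ) (hp : 0 < p) (hq : 0 < q) :
    ∫ t in Ioi (0:ℝ), t ^ (-(1:ℝ)/2) * Real.exp (-(p/t) - q*t)
      = Real.sqrt (p/q) * ∫ t in Ioi (0:ℝ), t ^ (-(3:ℝ)/2) * Real.exp (-(p/t) - q*t) := by
  set f : ℝ → ℝ := fun u => u ^ (-(1:ℝ)/2) * Real.exp (-(p/u) - q*u) with hf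
  have himg : (fun t : ℝ => p/(q*t)) '' Ioi 0 = Ioi 0 := by
    ext y; constructor
    · rintro ⟨t, ht, rfl⟩
      exact div_pos hp (mul_pos hq ht)
    · intro hy
      refine ⟨p/(q*y), div_pos hp (mul_pos hq hy), ?_⟩
      field_simp
  have hderiv : ∀ t ∈ Ioi (0:ℝ),
      HasDerivWithinAt (fun t : ℝ => p/(q*t)) (-(p/q)/t^2) (Ioi 0) t := by
    intro t ht
    have ht0 : t ≠ 0 := ne_of_gt ht
    have heq : (fun t : ℝ => p/(q*t)) = fun t : ℝ => (p/q)*t⁻¹ := by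
      funext s; rw [div_mul_eq_div_div, div_eq_mul_inv]
    have h1 : HasDerivAt (fun t : ℝ => (p/q)*t⁻¹) ((p/q) * (-(t^2)⁻¹)) t :=
      (hasDerivAt_inv ht0).const_mul (p/q)
    rw [heq]
    rw [show -(p/q)/t^2 = (p/q) * (-(t^2)⁻¹) by ring]
    exact h1.hasDerivWithinAt
  have hinj : InjOn (fun t : ℝ => p/(q*t)) (Ioi 0) := by
    intro a ha b hb h
    have ha' : (0:ℝ) < a := ha
    have hb' : (0:ℝ) < b := hb
    simp only at h
    rw [div_eq_div_iff (by positivity) (by positivity)] at h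
    have := mul_left_cancel₀ (ne_of_gt hp) h
    exact (mul_left_cancel₀ (ne_of_gt hq) this).symm
  have key := integral_image_eq_integral_abs_deriv_smul measurableSet_Ioi hderiv hinj f
  rw [himg] at key
  rw [key, ← integral_const_mul]
  apply setIntegral_congr_fun measurableSet_Ioi
  intro t ht
  have ht0 : (0:ℝ) < t := ht
  simp only [smul_eq_mul, hf]
  have habs : |(-(p/q)/t^2)| = (p/q)/t^2 := by
    rw [abs_div, abs_neg, abs_of_nonneg (by positivity), abs_of_nonneg (by positivity)]
  have harg1 : p/(p/(q*t)) = q*t := by field_simp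
  have harg2 : q*(p/(q*t)) = p/t := by field_simp
  have hbase : p/(q*t) = (p/q)/t := by rw [div_mul_eq_div_div]
  have hrpow : (p/(q*t)) ^ (-(1:ℝ)/2) = (p/q) ^ (-(1:ℝ)/2) / t ^ (-(1:ℝ)/2) := by
    rw [hbase, Real.div_rpow (by positivity) (le_of_lt ht0)]
  rw [habs, harg1, harg2, hrpow]
  have hcoef : (p/q)/t^2 * ((p/q) ^ (-(1:ℝ)/2) / t ^ (-(1:ℝ)/2))
      = Real.sqrt (p/q) * t ^ (-(3:ℝ)/2) := by
    have h1 : (p/q) * (p/q) ^ (-(1:ℝ)/2) = Real.sqrt (p/q) := by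
      rw [Real.sqrt_eq_rpow]
      nth_rewrite 1 [← Real.rpow_one (p/q)]
      rw [← Real.rpow_add (by positivity)]
      norm_num
    have h2 : (t^2 * t ^ (-(1:ℝ)/2))⁻¹ = t ^ (-(3:ℝ)/2) := by
      rw [← Real.rpow_natCast t 2, ← Real.rpow_add ht0, ← Real.rpow_neg (le_of_lt ht0)]
      norm_num
    rw [div_mul_div_comm, h1, ← h2]
    ring
  rw [show Real.exp (-(q*t) - p/t) = Real.exp (-(p/t) - q*t) by ring_nf]
  rw [← mul_assoc, hcoef]
  ring

lemma gauss_sub (p q : ℝ) (hp : 0 < p) (hq : 0 < q) :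
    ∫ t in Ioi (0:ℝ),
      (Real.sqrt q/(2*Real.sqrt t) + Real.sqrt p/(2*(t*Real.sqrt t))) * Real.exp (-(p/t) - q*t)
    = Real.exp (-(2*Real.sqrt (p*q))) * Real.sqrt π := by
  set sp := Real.sqrt p with hsp
  set sq := Real.sqrt q with hsq
  have hsp0 : 0 < sp := Real.sqrt_pos.mpr hp
  have hsq0 : 0 < sq := Real.sqrt_pos.mpr hq
  have hsp2 : sp^2 = p := Real.sq_sqrt hp.le
  have hsq2 : sq^2 = q := Real.sq_sqrt hq.le
  have hpq : Real.sqrt (p*q) = sp*sq := Real.sqrt_mul hp.le q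
  set g : ℝ → ℝ := fun t => sq * Real.sqrt t - sp / Real.sqrt t with hg
  set g' : ℝ → ℝ := fun t => sq/(2*Real.sqrt t) + sp/(2*(t*Real.sqrt t)) with hg'
  have hderiv : ∀ t ∈ Ioi (0:ℝ), HasDerivWithinAt g (g' t) (Ioi 0) t := by
    intro t ht
    have ht0 : (0:ℝ) < t := ht
    have htne : t ≠ 0 := ne_of_gt ht0
    have hst : Real.sqrt t ^ 2 = t := Real.sq_sqrt ht0.le
    have hstne : Real.sqrt t ≠ 0 := ne_of_gt (Real.sqrt_pos.mpr ht0)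
    have h1 : HasDerivAt (fun s : ℝ => sq * Real.sqrt s) (sq * (1/(2*Real.sqrt t))) t :=
      (Real.hasDerivAt_sqrt htne).const_mul sq
    have h2 : HasDerivAt (fun s : ℝ => sp / Real.sqrt s)
        ((0 * Real.sqrt t - sp * (1/(2*Real.sqrt t))) / (Real.sqrt t)^2) t :=
      (hasDerivAt_const t sp).div (Real.hasDerivAt_sqrt htne) hstne
    have h3 := h1.sub h2
    have heq : sq * (1/(2*Real.sqrt t)) -
        (0 * Real.sqrt t - sp * (1/(2*Real.sqrt t))) / (Real.sqrt t)^2 = g' t := by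
      rw [hst, hg']
      field_simp
      ring
    rw [heq] at h3
    exact h3.hasDerivWithinAt
  have hmono : StrictMonoOn g (Ioi 0) := by
    intro a ha b hb hab
    have ha0 : (0:ℝ) < a := ha
    have hb0 : (0:ℝ) < b := hb
    have h1 : Real.sqrt a < Real.sqrt b := Real.sqrt_lt_sqrt ha0.le hab
    have ha' : 0 < Real.sqrt a := Real.sqrt_pos.mpr ha0
    have h2 : sq * Real.sqrt a < sq * Real.sqrt b := by
      exact mul_lt_mul_of_pos_left h1 hsq0
    have h3 : sp / Real.sqrt b < sp / Real.sqrt a := by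
      exact div_lt_div_of_pos_left hsp0 ha' h1
    simp only [hg]
    linarith
  have hinj : InjOn g (Ioi 0) := hmono.injOn
  have himg : g '' Ioi 0 = univ := by
    apply eq_univ_of_forall
    intro y
    set D := y^2 + 4*sp*sq with hD
    have hD0 : 0 < D := by nlinarith
    set sD := Real.sqrt D with hsD
    have hsD2 : sD^2 = D := Real.sq_sqrt hD0.le
    have habs : |y| < sD := by
      rw [hsD, ← Real.sqrt_sq_eq_abs]
      apply Real.sqrt_lt_sqrt (sq_nonneg y)
      nlinarith
    have hys : 0 < y + sD := by
      cases' abs_lt.mp habs with h1 h2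
      linarith
    set s := (y + sD)/(2*sq) with hs
    have hs0 : 0 < s := div_pos hys (by positivity)
    refine ⟨s^2, mem_Ioi.mpr (by positivity), ?_⟩
    have hss : Real.sqrt (s^2) = s := Real.sqrt_sq hs0.le
    have hquad : sq * s^2 - y * s - sp = 0 := by
      rw [hs]
      field_simp
      nlinarith [hsD2]
    simp only [hg, hss]
    have hsne : s ≠ 0 := ne_of_gt hs0
    field_simp
    linarith [hquad]
  have key := integral_image_eq_integral_abs_deriv_smul measurableSet_Ioi hderiv hinj
    (fun x => Real.exp (-x^2))
  rw [himg, Measure.restrict_univ] at key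
  have hgauss : (∫ x : ℝ, Real.exp (-x^2)) = Real.sqrt π := by
    have := integral_gaussian 1
    simpa using this
  rw [hgauss] at key
  have hcongr : ∫ t in Ioi (0:ℝ), |g' t| • Real.exp (-(g t)^2)
      = Real.exp (2*Real.sqrt (p*q)) * ∫ t in Ioi (0:ℝ),
        (sq/(2*Real.sqrt t) + sp/(2*(t*Real.sqrt t))) * Real.exp (-(p/t) - q*t) := by
    rw [← integral_const_mul]
    apply setIntegral_congr_fun measurableSet_Ioi
    intro t ht
    have ht0 : (0:ℝ) < t := ht
    have hst : Real.sqrt t ^ 2 = t := Real.sq_sqrt ht0.le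
    have hst0 : 0 < Real.sqrt t := Real.sqrt_pos.mpr ht0
    have habs : |g' t| = g' t := abs_of_pos (by positivity)
    have hww : Real.sqrt t * Real.sqrt t = t := Real.mul_self_sqrt ht0.le
    have hexp : -(g t)^2 = 2*Real.sqrt (p*q) + (-(p/t) - q*t) := by
      simp only [hg, hpq]
      field_simp
      rw [hst]
      linear_combination (-(t^3)) * hsq2 + (-t) * hsp2
    simp only [smul_eq_mul]
    rw [habs, hexp, Real.exp_add, hg']
    ring
  rw [hcongr] at key
  rw [Real.exp_neg]
  rw [inv_mul_eq_div, eq_div_iff (Real.exp_ne_zero _)]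
  linarith [key]

lemma rpow_neg_half_eq {t : ℝ} (ht : 0 < t) : t ^ (-(1:ℝ)/2) = (Real.sqrt t)⁻¹ := by
  rw [show (-(1:ℝ)/2) = -(1/2) by norm_num, Real.rpow_neg ht.le, ← Real.sqrt_eq_rpow]

lemma rpow_neg_3half_eq {t : ℝ} (ht : 0 < t) : t ^ (-(3:ℝ)/2) = (t * Real.sqrt t)⁻¹ := by
  rw [show (-(3:ℝ)/2) = -(3/2) by norm_num, Real.rpow_neg ht.le,
    show (3:ℝ)/2 = 1 + 1/2 by norm_num, Real.rpow_add ht, Real.rpow_one, ← Real.sqrt_eq_rpow]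


lemma intA (p q : ℝ) (hp : 0 < p) (hq : 0 ≤ q) :
    ∫ t in Ioi (0:ℝ), t ^ (-(3:ℝ)/2) * Real.exp (-(p/t) - q*t)
      = Real.sqrt π / Real.sqrt p * Real.exp (-(2*Real.sqrt (p*q))) := by
  have hsp0 : 0 < Real.sqrt p := Real.sqrt_pos.mpr hp
  rcases eq_or_lt_of_le hq with hq0 | hqpos
  · -- q = 0 : Gamma function case
    subst hq0
    simp only [mul_zero, Real.sqrt_zero, zero_mul, neg_zero, Real.exp_zero, mul_one, sub_zero]
    have hG : Real.Gamma (1/2) = ∫ x in Ioi (0:ℝ), Real.exp (-x) * x ^ ((1:ℝ)/2 - 1) :=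
      Real.Gamma_eq_integral (by norm_num)
    rw [Real.Gamma_one_half_eq] at hG
    have himg : (fun t : ℝ => p/t) '' Ioi 0 = Ioi 0 := by
      ext y; constructor
      · rintro ⟨t, ht, rfl⟩
        exact div_pos hp ht
      · intro hy
        exact ⟨p/y, div_pos hp hy, by field_simp⟩
    have hderiv : ∀ t ∈ Ioi (0:ℝ),
        HasDerivWithinAt (fun t : ℝ => p/t) (-p/t^2) (Ioi 0) t := by
      intro t ht
      have ht0 : t ≠ 0 := ne_of_gt ht
      have h1 : HasDerivAt (fun t : ℝ => p * t⁻¹) (p * (-(t^2)⁻¹)) t :=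
        (hasDerivAt_inv ht0).const_mul p
      have heq : (fun t : ℝ => p/t) = fun t : ℝ => p * t⁻¹ := by
        funext s; rw [div_eq_mul_inv]
      rw [heq]
      rw [show -p/t^2 = p * (-(t^2)⁻¹) by ring]
      exact h1.hasDerivWithinAt
    have hinj : InjOn (fun t : ℝ => p/t) (Ioi 0) := by
      intro a ha b hb h
      have ha' : (0:ℝ) < a := ha
      have hb' : (0:ℝ) < b := hb
      simp only at h
      rw [div_eq_div_iff (by positivity) (by positivity)] at h
      exact (mul_left_cancel₀ (ne_of_gt hp) h).symm
    have key := integral_image_eq_integral_abs_deriv_smul measurableSet_Ioi hderiv hinj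
      (fun x => Real.exp (-x) * x ^ ((1:ℝ)/2 - 1))
    rw [himg, ← hG] at key
    have hcongr : ∫ t in Ioi (0:ℝ), |(-p/t^2)| • (Real.exp (-(p/t)) * (p/t) ^ ((1:ℝ)/2 - 1))
        = Real.sqrt p * ∫ t in Ioi (0:ℝ), t ^ (-(3:ℝ)/2) * Real.exp (-(p/t)) := by
      rw [← integral_const_mul]
      apply setIntegral_congr_fun measurableSet_Ioi
      intro t ht
      have ht0 : (0:ℝ) < t := ht
      simp only [smul_eq_mul]
      have habs : |(-p/t^2)| = p/t^2 := by
        rw [abs_div, abs_neg, abs_of_nonneg hp.le, abs_of_nonneg (by positivity)]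
      have he : ((1:ℝ)/2 - 1) = (-(1:ℝ)/2) := by norm_num
      rw [habs, he, Real.div_rpow hp.le ht0.le, rpow_neg_half_eq hp, rpow_neg_half_eq ht0,
        rpow_neg_3half_eq ht0]
      have hsqt : 0 < Real.sqrt t := Real.sqrt_pos.mpr ht0
      have h2 : Real.sqrt p * Real.sqrt p = p := Real.mul_self_sqrt hp.le
      have h3 : Real.sqrt t * Real.sqrt t = t := Real.mul_self_sqrt ht0.le
      field_simp
      ring_nf
      linear_combination p * (Real.sq_sqrt ht0.le) - t * (Real.sq_sqrt hp.le)
    rw [hcongr] at key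
    rw [eq_div_iff (ne_of_gt hsp0)]
    linarith
  · -- q > 0
    set sp := Real.sqrt p with hspd
    set sq := Real.sqrt q with hsqd
    have hsq0 : 0 < sq := Real.sqrt_pos.mpr hqpos
    set J3 := ∫ t in Ioi (0:ℝ), t ^ (-(3:ℝ)/2) * Real.exp (-(p/t) - q*t) with hJ3
    set J1 := ∫ t in Ioi (0:ℝ), t ^ (-(1:ℝ)/2) * Real.exp (-(p/t) - q*t) with hJ1
    have h1 : J1 = sp/sq * J3 := by
      rw [hJ1, reflect_sub p q hp hqpos, ← hJ3, Real.sqrt_div hp.le]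
    have h2 := gauss_sub p q hp hqpos
    have h3 : ∫ t in Ioi (0:ℝ),
        (sq/(2*Real.sqrt t) + sp/(2*(t*Real.sqrt t))) * Real.exp (-(p/t) - q*t)
        = (sq/2) * J1 + (sp/2) * J3 := by
      have hcong : ∀ t ∈ Ioi (0:ℝ),
          (sq/(2*Real.sqrt t) + sp/(2*(t*Real.sqrt t))) * Real.exp (-(p/t) - q*t)
          = (sq/2) * (t ^ (-(1:ℝ)/2) * Real.exp (-(p/t) - q*t))
            + (sp/2) * (t ^ (-(3:ℝ)/2) * Real.exp (-(p/t) - q*t)) := by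
        intro t ht
        have ht0 : (0:ℝ) < t := ht
        rw [rpow_neg_half_eq ht0, rpow_neg_3half_eq ht0]
        have hsqt : 0 < Real.sqrt t := Real.sqrt_pos.mpr ht0
        field_simp
      rw [setIntegral_congr_fun measurableSet_Ioi hcong, integral_add
        (((integrable_core12 p q hp hqpos).const_mul _))
        (((integrable_core32 p q hp hq).const_mul _)),
        integral_const_mul, integral_const_mul]
    rw [h3] at h2
    have hfinal : sp * J3 = Real.exp (-(2*Real.sqrt (p*q))) * Real.sqrt π := by
      rw [h1] at h2
      have hx : sq/2*(sp/sq*J3) = sp/2*J3 := by field_simp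
      rw [hx] at h2
      linarith
    rw [div_mul_eq_mul_div, eq_div_iff (ne_of_gt hsp0)]
    linear_combination hfinal



lemma psd_combine {n p : ℕ} (s : ℝ) (hs : 0 ≤ s) (x : Fin n → ℝ) (b : Fin n → Fin p → ℝ) :
    0 ≤ ∑ u : Fin n, ∑ v : Fin n, ∑ i : Fin p, ∑ j : Fin p,
      (if i = j then (1:ℝ) else 1/2) * (b u i * b v j) * Real.exp (-(x u - x v)^2 * s) := by
  have key : ∀ u v : Fin n, ∑ i : Fin p, ∑ j : Fin p,
        (if i = j then (1:ℝ) else 1/2) * (b u i * b v j) * Real.exp (-(x u - x v)^2 * s)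
      = 1/2 * ((∑ i : Fin p, b u i) * (∑ i : Fin p, b v i) * Real.exp (-(x u - x v)^2 * s))
        + 1/2 * ∑ i : Fin p, b u i * b v i * Real.exp (-(x u - x v)^2 * s) := by
    intro u v
    set E := Real.exp (-(x u - x v)^2 * s) with hE
    have h1 : ∀ i j : Fin p, (if i = j then (1:ℝ) else 1/2) * (b u i * b v j) * E
        = 1/2 * (b u i * (b v j * E)) + (if i = j then 1/2 * (b u i * (b v j * E)) else 0) := by
      intro i j; split_ifs <;> ring
    simp_rw [h1, Finset.sum_add_distrib, Finset.sum_ite_eq, Finset.mem_univ, if_true]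
    congr 1
    · have h2 : ∀ i : Fin p, ∑ j : Fin p, 1/2 * (b u i * (b v j * E))
          = (1/2 * E * b u i) * ∑ j : Fin p, b v j := by
        intro i
        rw [Finset.mul_sum]
        exact Finset.sum_congr rfl fun j _ => by ring
      simp_rw [h2]
      rw [← Finset.sum_mul, ← Finset.mul_sum]
      ring
    · rw [Finset.mul_sum]
      exact Finset.sum_congr rfl fun i _ => by ring
  calc (0:ℝ) ≤ 1/2 * (∑ u : Fin n, ∑ v : Fin n,
          (∑ i : Fin p, b u i) * (∑ i : Fin p, b v i) * Real.exp (-(x u - x v)^2 * s))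
        + 1/2 * ∑ i : Fin p, ∑ u : Fin n, ∑ v : Fin n,
          b u i * b v i * Real.exp (-(x u - x v)^2 * s) := by
        apply add_nonneg
        · exact mul_nonneg (by norm_num) (gauss_kernel_psd s hs x _)
        · exact mul_nonneg (by norm_num)
            (Finset.sum_nonneg fun i _ => gauss_kernel_psd s hs x (fun u => b u i))
    _ = ∑ u : Fin n, ∑ v : Fin n, ∑ i : Fin p, ∑ j : Fin p,
          (if i = j then (1:ℝ) else 1/2) * (b u i * b v j) * Real.exp (-(x u - x v)^2 * s) := by
        simp_rw [key]
        simp only [Finset.sum_add_distrib]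
        congr 1
        · rw [Finset.mul_sum]
          refine Finset.sum_congr rfl fun u _ => ?_
          rw [Finset.mul_sum]
        · simp only [Finset.mul_sum]
          rw [Finset.sum_comm]
          exact Finset.sum_congr rfl fun u _ => Finset.sum_comm

/-- validity (positive semidefiniteness) of the multivariate Matérn
(ν = 1/2, exponential) cross-covariance specification used in the stationary
simulation scenario. -/
theorem multivariate_matern_valid (p : ℕ) (hp : 1 ≤ p) (φ : Fin p → ℝ)
    (hφ : ∀ i, 0 < φ i) :
    ∀ n : ℕ, 1 ≤ n → ∀ (t : Fin n → ℝ) (a : Fin n → Fin p → ℝ),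
      0 ≤ ∑ u : Fin n, ∑ v : Fin n, ∑ i : Fin p, ∑ j : Fin p,
        a u i *
          ((if i = j then (1 : ℝ) else 1 / 2) * Real.sqrt (φ i * φ j) /
            Real.sqrt ((φ i ^ 2 + φ j ^ 2) / 2)) *
          Real.exp (-Real.sqrt ((φ i ^ 2 + φ j ^ 2) / 2) * |t u - t v|) *
          a v j := by
  intro n hn t a
  set P : Fin p → Fin p → ℝ := fun i j => (φ i ^ 2 + φ j ^ 2)/8 with hPdef
  have hP : ∀ i j, 0 < P i j := fun i j => by
    have := hφ i; have := hφ j; positivity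
  set F : Fin n → Fin n → Fin p → Fin p → ℝ → ℝ := fun u v i j s =>
    (a u i * a v j * (if i = j then (1:ℝ) else 1/2) * Real.sqrt (φ i * φ j) / (2*Real.sqrt π)) *
      (s ^ (-(3:ℝ)/2) * Real.exp (-(P i j/s) - (t u - t v)^2*s)) with hFdef
  have hInt : ∀ u v i j, IntegrableOn (F u v i j) (Ioi 0) := fun u v i j =>
    (integrable_core32 (P i j) ((t u - t v)^2) (hP i j) (sq_nonneg _)).const_mul _
  have hval : ∀ u v i j, (∫ s in Ioi (0:ℝ), F u v i j s)
      = a u i *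
          ((if i = j then (1 : ℝ) else 1 / 2) * Real.sqrt (φ i * φ j) /
            Real.sqrt ((φ i ^ 2 + φ j ^ 2) / 2)) *
          Real.exp (-Real.sqrt ((φ i ^ 2 + φ j ^ 2) / 2) * |t u - t v|) * a v j := by
    intro u v i j
    rw [hFdef]
    simp only
    rw [MeasureTheory.integral_const_mul, intA (P i j) ((t u - t v)^2) (hP i j) (sq_nonneg _)]
    have h4P : (φ i ^ 2 + φ j ^ 2)/2 = 4 * P i j := by rw [hPdef]; ring
    have hsqrt4 : Real.sqrt (4 * P i j) = 2 * Real.sqrt (P i j) := by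
      rw [Real.sqrt_mul (by norm_num), show (4:ℝ) = 2^2 by norm_num, Real.sqrt_sq (by norm_num)]
    have hsqP : Real.sqrt (P i j * (t u - t v)^2)
        = Real.sqrt (P i j) * |t u - t v| := by
      rw [Real.sqrt_mul (hP i j).le, Real.sqrt_sq_eq_abs]
    have hπ : 0 < Real.sqrt π := Real.sqrt_pos.mpr Real.pi_pos
    have hsP : 0 < Real.sqrt (P i j) := Real.sqrt_pos.mpr (hP i j)
    rw [h4P, hsqrt4, hsqP]
    rw [show -(2 * Real.sqrt (P i j)) * |t u - t v| = -(2 * (Real.sqrt (P i j) * |t u - t v|))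
      by ring]
    field_simp
  have hnn : ∀ s ∈ Ioi (0:ℝ),
      0 ≤ ∑ u : Fin n, ∑ v : Fin n, ∑ i : Fin p, ∑ j : Fin p, F u v i j s := by
    intro s hs
    have hs0 : (0:ℝ) < s := hs
    set b : Fin n → Fin p → ℝ := fun u i =>
      Real.sqrt (φ i) * Real.exp (-(φ i)^2/(8*s)) * a u i with hbdef
    have hFrw : ∀ u v i j, F u v i j s
        = (s ^ (-(3:ℝ)/2) / (2*Real.sqrt π)) *
            ((if i = j then (1:ℝ) else 1/2) * (b u i * b v j) *
              Real.exp (-(t u - t v)^2 * s)) := by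
      intro u v i j
      rw [hFdef, hbdef]
      simp only
      rw [Real.sqrt_mul (hφ i).le]
      rw [show -(P i j/s) - (t u - t v)^2*s
          = (-(φ i)^2/(8*s)) + ((-(φ j)^2/(8*s)) + (-(t u - t v)^2 * s)) by rw [hPdef]; ring_nf]
      rw [Real.exp_add, Real.exp_add]
      ring
    simp_rw [hFrw]
    simp only [← Finset.mul_sum]
    apply mul_nonneg
    · have := Real.sqrt_nonneg π
      positivity
    · exact psd_combine s hs0.le t b
  calc (0:ℝ) ≤ ∫ s in Ioi (0:ℝ), ∑ u : Fin n, ∑ v : Fin n, ∑ i : Fin p, ∑ j : Fin p,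
        F u v i j s := by
        apply setIntegral_nonneg measurableSet_Ioi hnn
    _ = ∑ u : Fin n, ∑ v : Fin n, ∑ i : Fin p, ∑ j : Fin p, ∫ s in Ioi (0:ℝ), F u v i j s := by
        rw [MeasureTheory.integral_finset_sum _ (fun u _ =>
          integrable_finset_sum _ (fun v _ => integrable_finset_sum _ (fun i _ =>
            integrable_finset_sum _ (fun j _ => hInt u v i j))))]
        refine Finset.sum_congr rfl fun u _ => ?_
        rw [MeasureTheory.integral_finset_sum _ (fun v _ =>
          integrable_finset_sum _ (fun i _ => integrable_finset_sum _ (fun j _ => hInt u v i j)))]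
        refine Finset.sum_congr rfl fun v _ => ?_
        rw [MeasureTheory.integral_finset_sum _ (fun i _ =>
          integrable_finset_sum _ (fun j _ => hInt u v i j))]
        refine Finset.sum_congr rfl fun i _ => ?_
        rw [MeasureTheory.integral_finset_sum _ (fun j _ => hInt u v i j)]
    _ = ∑ u : Fin n, ∑ v : Fin n, ∑ i : Fin p, ∑ j : Fin p,
        a u i *
          ((if i = j then (1 : ℝ) else 1 / 2) * Real.sqrt (φ i * φ j) /
            Real.sqrt ((φ i ^ 2 + φ j ^ 2) / 2)) *
          Real.exp (-Real.sqrt ((φ i ^ 2 + φ j ^ 2) / 2) * |t u - t v|) * a v j := by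
        refine Finset.sum_congr rfl fun u _ => Finset.sum_congr rfl fun v _ =>
          Finset.sum_congr rfl fun i _ => Finset.sum_congr rfl fun j _ => hval u v i j

end
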